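/- For every real number x ≠ 0, cosh(x) − (cosh x)⁻¹ − x · arctan(sinh x) > 0. -/

import Mathlib

/-!
The function `f x = cosh x - (cosh x)⁻¹ - x * arctan (sinh x)` is even and vanishes at `0`
together with `f'`. Using `arctan (sinh x)' = (cosh x)⁻¹` one finds
`f'' x = sinh x * (sinh x * cosh x ^ 2 + x * cosh x - 2 * sinh x) / cosh x ^ 3`, and for `x > 0`
the inequality `sinh x < x * cosh x` bounds the bracket below by `sinh x ^ 3 > 0`.
Hence `f'` and then `f` are positive on `(0, ∞)`.
-/

open Real

lemma strictMonoOn_Ici_of_hasDerivAt_pos {g g' : ℝ → ℝ} {a : ℝ}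
    (hg : ∀ t, HasDerivAt g (g' t) t) (hg' : ∀ t, a < t → 0 < g' t) :
    StrictMonoOn g (Set.Ici a) :=
  strictMonoOn_of_hasDerivWithinAt_pos (convex_Ici a)
    (fun t _ => (hg t).continuousAt.continuousWithinAt)
    (fun t _ => (hg t).hasDerivWithinAt)
    (fun t ht => hg' t (by simpa using ht))

lemma pos_of_hasDerivAt_pos_of_eq_zero {g g' : ℝ → ℝ} (hg : ∀ t, HasDerivAt g (g' t) t)
    (hg' : ∀ t, 0 < t → 0 < g' t) (h0 : g 0 = 0) {x : ℝ} (hx : 0 < x) : 0 < g x := by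
  simpa [h0] using
    strictMonoOn_Ici_of_hasDerivAt_pos hg hg' Set.self_mem_Ici (Set.mem_Ici.2 hx.le) hx

lemma sinh_lt_mul_cosh {x : ℝ} (hx : 0 < x) : sinh x < x * cosh x := by
  have hderiv (t : ℝ) : HasDerivAt (fun t => t * cosh t - sinh t) (t * sinh t) t := by
    refine (((hasDerivAt_id t).mul (hasDerivAt_cosh t)).sub (hasDerivAt_sinh t)).congr_deriv ?_
    simp
  have := pos_of_hasDerivAt_pos_of_eq_zero hderiv
    (fun t ht => mul_pos ht (sinh_pos_iff.2 ht)) (by simp) hx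
  linarith

lemma hasDerivAt_arctan_sinh (x : ℝ) :
    HasDerivAt (fun t => arctan (sinh t)) (cosh x)⁻¹ x := by
  refine ((hasDerivAt_arctan (sinh x)).comp x (hasDerivAt_sinh x)).congr_deriv ?_
  have hc := (cosh_pos x).ne'
  rw [← cosh_sq']
  field_simp

lemma hasDerivAt_cosh_sub_inv_sub_mul_arctan_sinh (x : ℝ) :
    HasDerivAt (fun t => cosh t - (cosh t)⁻¹ - t * arctan (sinh t))
      (sinh x + sinh x / cosh x ^ 2 - arctan (sinh x) - x / cosh x) x := by
  refine (((hasDerivAt_cosh x).sub ((hasDerivAt_cosh x).inv (cosh_pos x).ne')).sub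
    ((hasDerivAt_id x).mul (hasDerivAt_arctan_sinh x))).congr_deriv ?_
  simp only [id_eq, one_mul]
  ring

lemma hasDerivAt_sinh_add_div_sub_arctan_sinh_sub_div (x : ℝ) :
    HasDerivAt (fun t => sinh t + sinh t / cosh t ^ 2 - arctan (sinh t) - t / cosh t)
      (sinh x * (sinh x * cosh x ^ 2 + x * cosh x - 2 * sinh x) / cosh x ^ 3) x := by
  have hc := (cosh_pos x).ne'
  refine ((((hasDerivAt_sinh x).add ((hasDerivAt_sinh x).div ((hasDerivAt_cosh x).pow 2)
    (pow_ne_zero 2 hc))).sub (hasDerivAt_arctan_sinh x)).sub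
    ((hasDerivAt_id x).div (hasDerivAt_cosh x) hc)).congr_deriv ?_
  simp only [Pi.pow_apply, id_eq]
  field_simp
  linear_combination cosh x ^ 3 * cosh_sq x

lemma sinh_add_div_sub_arctan_sinh_sub_div_pos {x : ℝ} (hx : 0 < x) :
    0 < sinh x + sinh x / cosh x ^ 2 - arctan (sinh x) - x / cosh x := by
  refine pos_of_hasDerivAt_pos_of_eq_zero hasDerivAt_sinh_add_div_sub_arctan_sinh_sub_div
    (fun t ht => ?_) (by simp) hx
  have hs := sinh_pos_iff.2 ht
  have hbracket : 0 < sinh t * cosh t ^ 2 + t * cosh t - 2 * sinh t := by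
    nlinarith [sinh_lt_mul_cosh ht, cosh_sq t, pow_pos hs 3]
  have := cosh_pos t
  positivity

lemma cosh_sub_inv_sub_mul_arctan_sinh_pos {x : ℝ} (hx : 0 < x) :
    0 < cosh x - (cosh x)⁻¹ - x * arctan (sinh x) :=
  pos_of_hasDerivAt_pos_of_eq_zero hasDerivAt_cosh_sub_inv_sub_mul_arctan_sinh
    (fun _ => sinh_add_div_sub_arctan_sinh_sub_div_pos) (by simp) hx

theorem stmt_0 (x : ℝ) (hx : x ≠ 0) :
    Real.cosh x - (Real.cosh x)⁻¹ - x * Real.arctan (Real.sinh x) > 0 := by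
  rcases hx.lt_or_gt with hneg | hpos
  · simpa [cosh_neg, sinh_neg, arctan_neg] using
      cosh_sub_inv_sub_mul_arctan_sinh_pos (neg_pos.2 hneg)
  · exact cosh_sub_inv_sub_mul_arctan_sinh_pos hpos
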